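/- arXiv:2401.16322 — 4 statements merged into one kernel-verified Lean document; each statement's English description precedes it below -/
import Mathlib

section
/- The centered staggered-grid finite difference formula ∂u/∂x(x+Δx/2) ≈ (1225/(1024Δx))·[(u(x+Δx)−u(x)) − (u(x+2Δx)−u(x−Δx))/15 + (u(x+3Δx)−u(x−2Δx))/125 − (u(x+4Δx)−u(x−3Δx))/1715] is accurate to 8th order: for a smooth (C^9) function u, the difference between the formula and u'(x+Δx/2) is O(Δx^8) as Δx → 0. -/
/-!
Expand every sample `u (x + s Δx)` and the target `u' (x + Δx / 2)` in Taylor series about `x`.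
The weights satisfy the moment conditions `∑ wᵢ sᵢ ^ j = j (1/2) ^ (j - 1)` for `j ≤ 8`, i.e. the
stencil differentiates every polynomial of degree `≤ 8` exactly at the half point. Hence the Taylor
polynomials cancel and only the `O(Δx ^ 9)` remainders of the samples and the `O(Δx ^ 8)` remainder
of `u'` survive; division by `Δx` turns the former into `O(Δx ^ 8)` as well.
-/

open Asymptotics Filter Topology

section

open Finset Nat

theorem isBigO_sub_taylor {f : ℝ → ℝ} {n : ℕ} (hf : ContDiff ℝ n f) (x : ℝ) :
    (fun t => f (x + t) - ∑ j ∈ range n, iteratedDeriv j f x * t ^ j / j !)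
      =O[𝓝 0] fun t => t ^ n := by
  have hlo : (fun y => f y - ∑ j ∈ range (n + 1), iteratedDeriv j f x * (y - x) ^ j / j !)
      =o[𝓝 x] fun y => (y - x) ^ n := by
    refine (taylor_isLittleO_univ hf).congr_left fun y => ?_
    simp only [taylor_within_apply, iteratedDerivWithin_univ, smul_eq_mul]
    congr 1
    exact sum_congr rfl fun j _ => by ring
  have hshift : Tendsto (fun t => x + t) (𝓝 0) (𝓝 x) := by
    simpa using tendsto_const_nhds.add (tendsto_id (x := 𝓝 (0 : ℝ)))
  have hrem : (fun t => f (x + t) - ∑ j ∈ range (n + 1), iteratedDeriv j f x * t ^ j / j !)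
      =O[𝓝 0] fun t => t ^ n :=
    (hlo.comp_tendsto hshift).isBigO.congr (fun t => by simp) fun t => by simp
  have htop : (fun t : ℝ => iteratedDeriv n f x / n ! * t ^ n) =O[𝓝 0] fun t => t ^ n :=
    (isBigO_refl _ _).const_mul_left _
  refine (hrem.add htop).congr_left fun t => ?_
  rw [sum_range_succ]
  ring

theorem isBigO_comp_mul_sub_taylor {f : ℝ → ℝ} {n : ℕ} (hf : ContDiff ℝ n f) (x s : ℝ) :
    (fun h => f (x + s * h) - ∑ j ∈ range n, iteratedDeriv j f x * (s * h) ^ j / j !)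
      =O[𝓝 0] fun h => h ^ n := by
  have hscale : Tendsto (fun h : ℝ => s * h) (𝓝 0) (𝓝 0) := by
    simpa using (tendsto_id (x := 𝓝 (0 : ℝ))).const_mul s
  refine ((isBigO_sub_taylor hf x).comp_tendsto hscale).trans ?_
  simpa only [Function.comp_def, mul_pow] using
    (isBigO_refl (fun h : ℝ => h ^ n) _).const_mul_left (s ^ n)

theorem sum_mul_taylor_eq_of_moments {ι : Type*} [Fintype ι] {s w : ι → ℝ} {c : ℝ} {n : ℕ}
    (hw₀ : ∑ i, w i = 0) (hw : ∀ j < n, ∑ i, w i * s i ^ (j + 1) = (j + 1) * c ^ j)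
    (d : ℕ → ℝ) (h : ℝ) :
    ∑ i, w i * ∑ j ∈ range (n + 1), d j * (s i * h) ^ j / j ! =
      h * ∑ j ∈ range n, d (j + 1) * (c * h) ^ j / j ! := by
  calc ∑ i, w i * ∑ j ∈ range (n + 1), d j * (s i * h) ^ j / j !
      = ∑ j ∈ range (n + 1), d j * h ^ j / j ! * ∑ i, w i * s i ^ j := by
        simp only [mul_sum]
        rw [sum_comm]
        exact sum_congr rfl fun j _ => sum_congr rfl fun i _ => by ring
    _ = h * ∑ j ∈ range n, d (j + 1) * (c * h) ^ j / j ! := by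
        rw [sum_range_succ', mul_sum (range n)]
        simp only [pow_zero, mul_one, hw₀, mul_zero, add_zero]
        refine sum_congr rfl fun j hj => ?_
        rw [hw j (mem_range.mp hj), factorial_succ]
        push_cast
        field_simp
        ring

theorem isBigO_stencil_sub_deriv {ι : Type*} [Fintype ι] {s w : ι → ℝ} {c : ℝ} {n : ℕ}
    (hw₀ : ∑ i, w i = 0) (hw : ∀ j < n, ∑ i, w i * s i ^ (j + 1) = (j + 1) * c ^ j)
    {f : ℝ → ℝ} (hf : ContDiff ℝ (n + 1) f) (x : ℝ) :
    (fun h => h⁻¹ * ∑ i, w i * f (x + s i * h) - deriv f (x + c * h)) =O[𝓝[≠] 0]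
      fun h => h ^ n := by
  set d : ℕ → ℝ := fun j => iteratedDeriv j f x
  have hsum : (fun h => ∑ i, w i * (f (x + s i * h) -
      ∑ j ∈ range (n + 1), d j * (s i * h) ^ j / j !)) =O[𝓝 0] fun h => h ^ (n + 1) :=
    IsBigO.fun_sum fun i _ =>
      (isBigO_comp_mul_sub_taylor (mod_cast hf) x (s i)).const_mul_left (w i)
  have hstencil : (fun h => h⁻¹ * ∑ i, w i * (f (x + s i * h) -
      ∑ j ∈ range (n + 1), d j * (s i * h) ^ j / j !)) =O[𝓝[≠] 0] fun h => h ^ n := by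
    refine ((isBigO_refl (fun h : ℝ => h⁻¹) _).mul (hsum.mono nhdsWithin_le_nhds)).congr'
      EventuallyEq.rfl ?_
    filter_upwards [self_mem_nhdsWithin] with h hh
    rw [_root_.pow_succ', inv_mul_cancel_left₀ hh]
  have hderiv := isBigO_comp_mul_sub_taylor hf.deriv' x c
  refine (hstencil.sub (hderiv.mono nhdsWithin_le_nhds)).congr' ?_ EventuallyEq.rfl
  filter_upwards [self_mem_nhdsWithin] with h hh
  simp only [mul_sub, sum_sub_distrib, sum_mul_taylor_eq_of_moments hw₀ hw d h,
    inv_mul_cancel_left₀ hh, ← iteratedDeriv_succ', d]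
  ring

end

/-- The 8th-order staggered-grid first-derivative formula at the half point. -/
theorem staggered_first_derivative_eighth_order
    (u : ℝ → ℝ) (x : ℝ) (hu : ContDiff ℝ 9 u) :
    (fun Δx : ℝ =>
        (1225 / (1024 * Δx)) *
          ((u (x + Δx) - u x) - (u (x + 2 * Δx) - u (x - Δx)) / 15
            + (u (x + 3 * Δx) - u (x - 2 * Δx)) / 125
            - (u (x + 4 * Δx) - u (x - 3 * Δx)) / 1715)
          - deriv u (x + Δx / 2))
      =O[𝓝[>] (0 : ℝ)] fun Δx : ℝ => Δx ^ 8 := by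
  let s : Fin 8 → ℝ := ![1, 0, 2, -1, 3, -2, 4, -3]
  let w : Fin 8 → ℝ := fun i => 1225 / 1024 * ![1, -1, -1 / 15, 1 / 15, 1 / 125, -1 / 125,
    -1 / 1715, 1 / 1715] i
  have hw₀ : ∑ i, w i = 0 := by
    simp [w, Fin.sum_univ_eight]
    norm_num
  have hw : ∀ j : ℕ, j < 8 → ∑ i, w i * s i ^ (j + 1) = ((j : ℝ) + 1) * (1 / 2 : ℝ) ^ j := by
    intro j hj
    interval_cases j <;> simp [s, w, Fin.sum_univ_eight] <;> norm_num
  refine ((isBigO_stencil_sub_deriv hw₀ hw (f := u) hu x).mono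
    (nhdsWithin_mono _ fun h hh => ne_of_gt hh)).congr_left fun h => ?_
  simp only [s, w, Fin.sum_univ_eight, Matrix.cons_val, Matrix.cons_val_zero, Matrix.cons_val_one]
  ring_nf
end

section
/- The one-sided free-surface second-derivative formula ∂²u/∂y²(x,0) ≈ (1/Δx²)[−(3144919/352800)u₀ + 16u₁ − 14u₂ + (112/9)u₃ − (35/4)u₄ + (112/25)u₅ − (14/9)u₆ + (16/49)u₇ − (1/32)u₈], where uᵢ = u(x, −iΔx), approximates the second derivative of a smooth function satisfying the Neumann condition ∂u/∂y(x,0)=0 to high order: for g : ℝ → ℝ of class C^10 with g'(0)=0, the formula applied to gᵢ = g(−iΔx) differs from g''(0) by O(Δx^8). -/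
open Asymptotics Filter Topology Set

private lemma itDW_eq (h : ℝ → ℝ) (hh : ContDiff ℝ 10 h) {k : ℕ} (hk : k ≤ 10)
    {x : ℝ} (hx : x ∈ Set.Icc (0:ℝ) 1) :
    iteratedDerivWithin k h (Set.Icc 0 1) x = iteratedDeriv k h x := by
  have hh' : ContDiff ℝ (10 : ℕ∞) h := by exact_mod_cast hh
  have h1 : iteratedFDerivWithin ℝ k h (Set.Icc (0:ℝ) 1) x = iteratedFDeriv ℝ k h x := by
    have := ((contDiff_iff_ftaylorSeries.mp hh').hasFTaylorSeriesUpToOn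
        (Set.Icc (0:ℝ) 1)).eq_iteratedFDerivWithin_of_uniqueDiffOn (by exact_mod_cast hk)
        (uniqueDiffOn_Icc zero_lt_one) hx
    exact this.symm
  rw [iteratedDerivWithin_eq_iteratedFDerivWithin, iteratedDeriv_eq_iteratedFDeriv, h1]

private lemma rem_bound (h : ℝ → ℝ) (hh : ContDiff ℝ 10 h) (c : ℝ) (hc0 : 0 ≤ c) (hc8 : c ≤ 8) :
    (fun Δx : ℝ => h (c * Δx)
        - ∑ k ∈ Finset.range 10, (((k.factorial : ℕ) : ℝ)⁻¹ * (c * Δx) ^ k) * iteratedDeriv k h 0)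
      =O[𝓝[>] (0:ℝ)] fun Δx => Δx ^ 10 := by
  have hQ : ContDiffOn ℝ (9 + 1 : ℕ) h (Set.Icc (0:ℝ) 1) := by
    have : ((9 + 1 : ℕ) : WithTop ℕ∞) = 10 := by norm_num
    rw [this]; exact hh.contDiffOn
  obtain ⟨C, hC⟩ := (isCompact_Icc (a := (0:ℝ)) (b := 1)).exists_bound_of_continuousOn
      (hQ.continuousOn_iteratedDerivWithin (m := 10) (by norm_num) (uniqueDiffOn_Icc zero_lt_one))
  have hC0 : 0 ≤ C := le_trans (norm_nonneg _) (hC 0 (by norm_num))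
  rw [isBigO_iff]
  refine ⟨C * 8 ^ 10 / (Nat.factorial 9 : ℝ), ?_⟩
  filter_upwards [Ioc_mem_nhdsGT (by norm_num : (0:ℝ) < 1/8)] with Δx hΔx
  have hΔ0 : 0 < Δx := hΔx.1
  have hxmem : c * Δx ∈ Set.Icc (0:ℝ) 1 := by
    constructor
    · positivity
    · calc c * Δx ≤ 8 * (1/8) := by
            apply mul_le_mul hc8 hΔx.2 hΔ0.le (by norm_num)
        _ = 1 := by norm_num
  have key := taylor_mean_remainder_bound (n := 9) (by norm_num : (0:ℝ) ≤ 1) hQ hxmem hC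
  rw [taylor_within_apply] at key
  have hsum : ∑ k ∈ Finset.range (9 + 1), (((k.factorial : ℕ) : ℝ)⁻¹ * (c * Δx - 0) ^ k) •
        iteratedDerivWithin k h (Set.Icc 0 1) 0
      = ∑ k ∈ Finset.range 10, (((k.factorial : ℕ) : ℝ)⁻¹ * (c * Δx) ^ k) * iteratedDeriv k h 0 := by
    refine Finset.sum_congr rfl fun k hk => ?_
    rw [Finset.mem_range] at hk
    rw [itDW_eq h hh (by omega)
        (by norm_num : (0:ℝ) ∈ Set.Icc (0:ℝ) 1)]
    rw [sub_zero, smul_eq_mul]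
  rw [hsum] at key
  calc ‖h (c * Δx) - ∑ k ∈ Finset.range 10, (((k.factorial : ℕ) : ℝ)⁻¹ * (c * Δx) ^ k) * iteratedDeriv k h 0‖
      ≤ C * (c * Δx - 0) ^ (9 + 1) / (Nat.factorial 9 : ℝ) := key
    _ ≤ C * 8 ^ 10 / (Nat.factorial 9 : ℝ) * ‖Δx ^ 10‖ := by
        rw [sub_zero]
        rw [Real.norm_eq_abs, abs_of_nonneg (by positivity : (0:ℝ) ≤ Δx ^ 10)]
        rw [div_mul_eq_mul_div]
        apply div_le_div_of_nonneg_right ?_ (by positivity)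
        calc C * (c * Δx) ^ (9+1) = C * (c ^ 10 * Δx ^ 10) := by ring
          _ ≤ C * (8 ^ 10 * Δx ^ 10) := by
              apply mul_le_mul_of_nonneg_left ?_ hC0
              apply mul_le_mul_of_nonneg_right (pow_le_pow_left₀ hc0 hc8 10) (by positivity)
          _ = C * 8 ^ 10 * Δx ^ 10 := by ring

/-- The one-sided free-surface second-derivative formula is 8th-order accurate
for smooth functions satisfying the Neumann condition `g'(0) = 0`. -/
theorem free_surface_second_derivative_eighth_order
    (g : ℝ → ℝ) (hg : ContDiff ℝ 10 g) (hneu : deriv g 0 = 0) :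
    (fun Δx : ℝ =>
        (1 / Δx ^ 2) *
          (-(3144919 / 352800) * g (-(0 : ℝ) * Δx)
            + 16 * g (-(1 : ℝ) * Δx)
            - 14 * g (-(2 : ℝ) * Δx)
            + (112 / 9) * g (-(3 : ℝ) * Δx)
            - (35 / 4) * g (-(4 : ℝ) * Δx)
            + (112 / 25) * g (-(5 : ℝ) * Δx)
            - (14 / 9) * g (-(6 : ℝ) * Δx)
            + (16 / 49) * g (-(7 : ℝ) * Δx)
            - (1 / 32) * g (-(8 : ℝ) * Δx))
          - iteratedDeriv 2 g 0)
      =O[𝓝[>] (0 : ℝ)] fun Δx : ℝ => Δx ^ 8 := by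
  classical
  set h : ℝ → ℝ := fun t => g (-t) with hhdef
  have hh : ContDiff ℝ 10 h := hg.comp contDiff_neg
  set a : ℕ → ℝ := fun k => iteratedDeriv k h 0 with hadef
  have ha1 : a 1 = 0 := by
    have : deriv h 0 = -deriv g 0 := by
      simpa using deriv_comp_neg (f := g) (x := (0:ℝ))
    simp [hadef, iteratedDeriv_one, this, hneu]
  have ha2 : a 2 = iteratedDeriv 2 g 0 := by
    have := iteratedDeriv_comp_neg 2 g 0
    simpa [hadef] using this
  have hgh : ∀ c Δx : ℝ, g (-c * Δx) = h (c * Δx) := by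
    intro c Δx; simp [hhdef, neg_mul]
  set T : ℝ → ℝ → ℝ := fun c Δx =>
    ∑ k ∈ Finset.range 10, (((k.factorial : ℕ) : ℝ)⁻¹ * (c * Δx) ^ k) * a k with hTdef
  have key : ∀ c : ℝ, 0 ≤ c → c ≤ 8 →
      (fun Δx : ℝ => h (c * Δx) - T c Δx) =O[𝓝[>] (0:ℝ)] fun Δx => Δx ^ 10 :=
    fun c hc0 hc8 => rem_bound h hh c hc0 hc8
  have H : (fun Δx : ℝ =>
        (-(3144919 / 352800) * g (-(0 : ℝ) * Δx)
            + 16 * g (-(1 : ℝ) * Δx)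
            - 14 * g (-(2 : ℝ) * Δx)
            + (112 / 9) * g (-(3 : ℝ) * Δx)
            - (35 / 4) * g (-(4 : ℝ) * Δx)
            + (112 / 25) * g (-(5 : ℝ) * Δx)
            - (14 / 9) * g (-(6 : ℝ) * Δx)
            + (16 / 49) * g (-(7 : ℝ) * Δx)
            - (1 / 32) * g (-(8 : ℝ) * Δx)) - a 2 * Δx ^ 2)
      =O[𝓝[>] (0:ℝ)] fun Δx => Δx ^ 10 := by
    have e : (fun Δx : ℝ =>
        (-(3144919 / 352800) * g (-(0 : ℝ) * Δx)
            + 16 * g (-(1 : ℝ) * Δx)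
            - 14 * g (-(2 : ℝ) * Δx)
            + (112 / 9) * g (-(3 : ℝ) * Δx)
            - (35 / 4) * g (-(4 : ℝ) * Δx)
            + (112 / 25) * g (-(5 : ℝ) * Δx)
            - (14 / 9) * g (-(6 : ℝ) * Δx)
            + (16 / 49) * g (-(7 : ℝ) * Δx)
            - (1 / 32) * g (-(8 : ℝ) * Δx)) - a 2 * Δx ^ 2)
        = fun Δx : ℝ =>
          (-(3144919 / 352800)) * (h (0 * Δx) - T 0 Δx)
            + 16 * (h (1 * Δx) - T 1 Δx)
            - 14 * (h (2 * Δx) - T 2 Δx)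
            + (112 / 9) * (h (3 * Δx) - T 3 Δx)
            - (35 / 4) * (h (4 * Δx) - T 4 Δx)
            + (112 / 25) * (h (5 * Δx) - T 5 Δx)
            - (14 / 9) * (h (6 * Δx) - T 6 Δx)
            + (16 / 49) * (h (7 * Δx) - T 7 Δx)
            - (1 / 32) * (h (8 * Δx) - T 8 Δx) := by
      funext Δx
      rw [hgh 0 Δx, hgh 1 Δx, hgh 2 Δx, hgh 3 Δx, hgh 4 Δx, hgh 5 Δx, hgh 6 Δx, hgh 7 Δx,
        hgh 8 Δx]
      simp only [hTdef, Finset.sum_range_succ, Finset.sum_range_zero]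
      rw [ha1]
      norm_num [Nat.factorial]
      ring
    rw [e]
    exact (((((((((key 0 (by norm_num) (by norm_num)).const_mul_left _).add
      ((key 1 (by norm_num) (by norm_num)).const_mul_left _)).sub
      ((key 2 (by norm_num) (by norm_num)).const_mul_left _)).add
      ((key 3 (by norm_num) (by norm_num)).const_mul_left _)).sub
      ((key 4 (by norm_num) (by norm_num)).const_mul_left _)).add
      ((key 5 (by norm_num) (by norm_num)).const_mul_left _)).sub
      ((key 6 (by norm_num) (by norm_num)).const_mul_left _)).add
      ((key 7 (by norm_num) (by norm_num)).const_mul_left _)).sub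
      ((key 8 (by norm_num) (by norm_num)).const_mul_left _)
  have H2 := H.mul (isBigO_refl (fun Δx : ℝ => (Δx ^ 2)⁻¹) (𝓝[>] (0:ℝ)))
  refine H2.congr' ?_ ?_
  · filter_upwards [self_mem_nhdsWithin] with Δx hΔx
    have hne : Δx ≠ 0 := ne_of_gt hΔx
    rw [← ha2]
    field_simp
  · filter_upwards [self_mem_nhdsWithin] with Δx hΔx
    have hne : Δx ≠ 0 := ne_of_gt (show (0:ℝ) < Δx from hΔx)
    field_simp
end

section
/- The staggered one-sided formula ∂u/∂y(x,−Δx/2) ≈ (1/Δx)[(5034629/3763200)u₀ − (23533/15360)u₁ + (4259/15360)u₂ − (1103/9216)u₃ + (151/3072)u₄ − (1171/76800)u₅ + (139/46080)u₆ − (211/752640)u₇], with uᵢ = u(x,−iΔx), approximates the first derivative at the half-point to 8th order for smooth functions satisfying the Neumann condition: for g of class C^9 with g'(0)=0, the formula differs from g'(−Δx/2) by O(Δx^8). -/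
open Asymptotics Filter Topology

open Set


open Set in
private lemma iterWithin_eq {f : ℝ → ℝ} {n k : ℕ} (hf : ContDiff ℝ (n : ℕ) f) (hk : k ≤ n)
    {s : Set ℝ} (hs : UniqueDiffOn ℝ s) {x : ℝ} (hx : x ∈ s) :
    iteratedDerivWithin k f s x = iteratedDeriv k f x := by
  rw [iteratedDerivWithin_eq_iteratedFDerivWithin, iteratedDeriv_eq_iteratedFDeriv]
  congr 1
  exact (((contDiff_iff_ftaylorSeries.mp hf).hasFTaylorSeriesUpToOn
    s).eq_iteratedFDerivWithin_of_uniqueDiffOn (by exact_mod_cast hk) hs hx).symm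

private lemma q_eq (g : ℝ → ℝ) (k : ℕ) :
    iteratedDeriv k (fun t : ℝ => deriv g (-t)) 0
      = -iteratedDeriv (k + 1) (fun t : ℝ => g (-t)) 0 := by
  have h1 := iteratedDeriv_comp_neg k (deriv g) 0
  have h2 := iteratedDeriv_comp_neg (k + 1) g 0
  rw [h1, h2, iteratedDeriv_succ']
  simp [pow_succ, smul_eq_mul]

set_option maxHeartbeats 4000000 in
/-- The one-sided staggered free-surface first-derivative formula is 8th-order
accurate at the half point for smooth functions with `g'(0) = 0`. -/
theorem free_surface_first_derivative_eighth_order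
    (g : ℝ → ℝ) (hg : ContDiff ℝ 9 g) (hneu : deriv g 0 = 0) :
    (fun Δx : ℝ =>
        (1 / Δx) *
          ((5034629 / 3763200) * g (-(0 : ℝ) * Δx)
            - (23533 / 15360) * g (-(1 : ℝ) * Δx)
            + (4259 / 15360) * g (-(2 : ℝ) * Δx)
            - (1103 / 9216) * g (-(3 : ℝ) * Δx)
            + (151 / 3072) * g (-(4 : ℝ) * Δx)
            - (1171 / 76800) * g (-(5 : ℝ) * Δx)
            + (139 / 46080) * g (-(6 : ℝ) * Δx)
            - (211 / 752640) * g (-(7 : ℝ) * Δx))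
          - deriv g (-(Δx / 2)))
      =O[𝓝[>] (0 : ℝ)] fun Δx : ℝ => Δx ^ 8 := by
  have hg9 : ContDiff ℝ 9 (fun t : ℝ => g (-t)) := hg.comp contDiff_neg
  have hd1 : iteratedDeriv 1 (fun s : ℝ => g (-s)) 0 = 0 := by
    rw [iteratedDeriv_comp_neg]
    simp [iteratedDeriv_one, hneu]
  have hdg : ContDiff ℝ 8 (deriv g) := by
    have h98 : (9 : WithTop ℕ∞) = 8 + 1 := by norm_num
    rw [h98] at hg
    exact (contDiff_succ_iff_deriv.mp hg).2.2
  have hp8 : ContDiff ℝ 8 (fun t : ℝ => deriv g (-t)) := hdg.comp contDiff_neg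
  -- Taylor bound for g ∘ neg
  obtain ⟨C₁', hC₁'⟩ := exists_taylor_mean_remainder_bound (f := fun t : ℝ => g (-t))
      (a := 0) (b := 1) (n := 8) zero_le_one (by exact_mod_cast hg9.contDiffOn)
  obtain ⟨C₂', hC₂'⟩ := exists_taylor_mean_remainder_bound (f := fun t : ℝ => deriv g (-t))
      (a := 0) (b := 1) (n := 7) zero_le_one (by exact_mod_cast hp8.contDiffOn)
  set C₁ := max C₁' 0 with hC₁def
  set C₂ := max C₂' 0 with hC₂def
  have hC₁0 : 0 ≤ C₁ := le_max_right _ _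
  have hC₂0 : 0 ≤ C₂ := le_max_right _ _
  have W1 : ∀ k : ℕ, k ≤ 8 → iteratedDerivWithin k (fun t : ℝ => g (-t)) (Icc (0:ℝ) 1) 0
      = iteratedDeriv k (fun s : ℝ => g (-s)) 0 := fun k hk =>
    iterWithin_eq (n := 9) (by exact_mod_cast hg9) (by omega) (uniqueDiffOn_Icc one_pos)
      (by norm_num)
  have W2 : ∀ k : ℕ, k ≤ 7 → iteratedDerivWithin k (fun t : ℝ => deriv g (-t)) (Icc (0:ℝ) 1) 0
      = iteratedDeriv k (fun t : ℝ => deriv g (-t)) 0 := fun k hk =>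
    iterWithin_eq (n := 8) (by exact_mod_cast hp8) (by omega) (uniqueDiffOn_Icc one_pos)
      (by norm_num)
  have hT1 : ∀ t ∈ Icc (0:ℝ) 1,
      |g (-t) - (iteratedDeriv 0 (fun s : ℝ => g (-s)) 0 + iteratedDeriv 2 (fun s : ℝ => g (-s)) 0 * (t) ^ 2 / 2 + iteratedDeriv 3 (fun s : ℝ => g (-s)) 0 * (t) ^ 3 / 6 + iteratedDeriv 4 (fun s : ℝ => g (-s)) 0 * (t) ^ 4 / 24 + iteratedDeriv 5 (fun s : ℝ => g (-s)) 0 * (t) ^ 5 / 120 + iteratedDeriv 6 (fun s : ℝ => g (-s)) 0 * (t) ^ 6 / 720 + iteratedDeriv 7 (fun s : ℝ => g (-s)) 0 * (t) ^ 7 / 5040 + iteratedDeriv 8 (fun s : ℝ => g (-s)) 0 * (t) ^ 8 / 40320)| ≤ C₁ * t ^ 9 := by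
    intro t ht
    have h1 := hC₁' t ht
    have h2 : taylorWithinEval (fun t : ℝ => g (-t)) 8 (Icc (0:ℝ) 1) 0 t
        = iteratedDeriv 0 (fun s : ℝ => g (-s)) 0 + iteratedDeriv 2 (fun s : ℝ => g (-s)) 0 * (t) ^ 2 / 2 + iteratedDeriv 3 (fun s : ℝ => g (-s)) 0 * (t) ^ 3 / 6 + iteratedDeriv 4 (fun s : ℝ => g (-s)) 0 * (t) ^ 4 / 24 + iteratedDeriv 5 (fun s : ℝ => g (-s)) 0 * (t) ^ 5 / 120 + iteratedDeriv 6 (fun s : ℝ => g (-s)) 0 * (t) ^ 6 / 720 + iteratedDeriv 7 (fun s : ℝ => g (-s)) 0 * (t) ^ 7 / 5040 + iteratedDeriv 8 (fun s : ℝ => g (-s)) 0 * (t) ^ 8 / 40320 := by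
      rw [taylor_within_apply]
      simp only [Finset.sum_range_succ, Finset.sum_range_zero, smul_eq_mul, sub_zero,
        W1 0 (by norm_num), W1 1 (by norm_num), W1 2 (by norm_num), W1 3 (by norm_num),
        W1 4 (by norm_num), W1 5 (by norm_num), W1 6 (by norm_num), W1 7 (by norm_num),
        W1 8 (by norm_num), hd1]
      norm_num [Nat.factorial]
      ring
    simp only [Real.norm_eq_abs, sub_zero] at h1
    rw [h2] at h1
    calc |g (-t) - (iteratedDeriv 0 (fun s : ℝ => g (-s)) 0 + iteratedDeriv 2 (fun s : ℝ => g (-s)) 0 * (t) ^ 2 / 2 + iteratedDeriv 3 (fun s : ℝ => g (-s)) 0 * (t) ^ 3 / 6 + iteratedDeriv 4 (fun s : ℝ => g (-s)) 0 * (t) ^ 4 / 24 + iteratedDeriv 5 (fun s : ℝ => g (-s)) 0 * (t) ^ 5 / 120 + iteratedDeriv 6 (fun s : ℝ => g (-s)) 0 * (t) ^ 6 / 720 + iteratedDeriv 7 (fun s : ℝ => g (-s)) 0 * (t) ^ 7 / 5040 + iteratedDeriv 8 (fun s : ℝ => g (-s)) 0 * (t) ^ 8 / 40320)| ≤ C₁'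 * t ^ 9 := h1
      _ ≤ C₁ * t ^ 9 := mul_le_mul_of_nonneg_right (le_max_left _ _) (pow_nonneg ht.1 9)
  have hT2 : ∀ t ∈ Icc (0:ℝ) 1,
      |deriv g (-t) + (iteratedDeriv 2 (fun s : ℝ => g (-s)) 0 * (t) ^ 1 / 1 + iteratedDeriv 3 (fun s : ℝ => g (-s)) 0 * (t) ^ 2 / 2 + iteratedDeriv 4 (fun s : ℝ => g (-s)) 0 * (t) ^ 3 / 6 + iteratedDeriv 5 (fun s : ℝ => g (-s)) 0 * (t) ^ 4 / 24 + iteratedDeriv 6 (fun s : ℝ => g (-s)) 0 * (t) ^ 5 / 120 + iteratedDeriv 7 (fun s : ℝ => g (-s)) 0 * (t) ^ 6 / 720 + iteratedDeriv 8 (fun s : ℝ => g (-s)) 0 * (t) ^ 7 / 5040)| ≤ C₂ * t ^ 8 := by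
    intro t ht
    have h1 := hC₂' t ht
    have h2 : taylorWithinEval (fun t : ℝ => deriv g (-t)) 7 (Icc (0:ℝ) 1) 0 t
        = -(iteratedDeriv 2 (fun s : ℝ => g (-s)) 0 * (t) ^ 1 / 1 + iteratedDeriv 3 (fun s : ℝ => g (-s)) 0 * (t) ^ 2 / 2 + iteratedDeriv 4 (fun s : ℝ => g (-s)) 0 * (t) ^ 3 / 6 + iteratedDeriv 5 (fun s : ℝ => g (-s)) 0 * (t) ^ 4 / 24 + iteratedDeriv 6 (fun s : ℝ => g (-s)) 0 * (t) ^ 5 / 120 + iteratedDeriv 7 (fun s : ℝ => g (-s)) 0 * (t) ^ 6 / 720 + iteratedDeriv 8 (fun s : ℝ => g (-s)) 0 * (t) ^ 7 / 5040) := by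
      rw [taylor_within_apply]
      simp only [Finset.sum_range_succ, Finset.sum_range_zero, smul_eq_mul, sub_zero,
        W2 0 (by norm_num), W2 1 (by norm_num), W2 2 (by norm_num), W2 3 (by norm_num),
        W2 4 (by norm_num), W2 5 (by norm_num), W2 6 (by norm_num), W2 7 (by norm_num),
        q_eq g 0, q_eq g 1, q_eq g 2, q_eq g 3, q_eq g 4, q_eq g 5, q_eq g 6, q_eq g 7, hd1]
      norm_num [Nat.factorial]
      ring
    simp only [Real.norm_eq_abs, sub_zero] at h1
    rw [h2] at h1
    have h3 : deriv g (-t) - -(iteratedDeriv 2 (fun s : ℝ => g (-s)) 0 * (t) ^ 1 / 1 + iteratedDeriv 3 (fun s : ℝ => g (-s)) 0 * (t) ^ 2 / 2 + iteratedDeriv 4 (fun s : ℝ => g (-s)) 0 * (t) ^ 3 / 6 + iteratedDeriv 5 (fun s : ℝ => g (-s)) 0 * (t) ^ 4 / 24 + iteratedDeriv 6 (fun s : ℝ => g (-s)) 0 * (t) ^ 5 / 120 + iteratedDeriv 7 (fun s : ℝ => g (-s)) 0 * (t) ^ 6 / 720 + iteratedDeriv 8 (fun s : ℝ => g (-s))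 0 * (t) ^ 7 / 5040)
        = deriv g (-t) + (iteratedDeriv 2 (fun s : ℝ => g (-s)) 0 * (t) ^ 1 / 1 + iteratedDeriv 3 (fun s : ℝ => g (-s)) 0 * (t) ^ 2 / 2 + iteratedDeriv 4 (fun s : ℝ => g (-s)) 0 * (t) ^ 3 / 6 + iteratedDeriv 5 (fun s : ℝ => g (-s)) 0 * (t) ^ 4 / 24 + iteratedDeriv 6 (fun s : ℝ => g (-s)) 0 * (t) ^ 5 / 120 + iteratedDeriv 7 (fun s : ℝ => g (-s)) 0 * (t) ^ 6 / 720 + iteratedDeriv 8 (fun s : ℝ => g (-s)) 0 * (t) ^ 7 / 5040) := by ring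
    rw [h3] at h1
    calc |deriv g (-t) + (iteratedDeriv 2 (fun s : ℝ => g (-s)) 0 * (t) ^ 1 / 1 + iteratedDeriv 3 (fun s : ℝ => g (-s)) 0 * (t) ^ 2 / 2 + iteratedDeriv 4 (fun s : ℝ => g (-s)) 0 * (t) ^ 3 / 6 + iteratedDeriv 5 (fun s : ℝ => g (-s)) 0 * (t) ^ 4 / 24 + iteratedDeriv 6 (fun s : ℝ => g (-s)) 0 * (t) ^ 5 / 120 + iteratedDeriv 7 (fun s : ℝ => g (-s)) 0 * (t) ^ 6 / 720 + iteratedDeriv 8 (fun s : ℝ => g (-s)) 0 * (t) ^ 7 / 5040)| ≤ C₂' * t ^ 8 := h1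
      _ ≤ C₂ * t ^ 8 := mul_le_mul_of_nonneg_right (le_max_left _ _) (pow_nonneg ht.1 8)
  rw [Asymptotics.isBigO_iff]
  refine ⟨1000000000 * C₁ + C₂, ?_⟩
  filter_upwards [Ioc_mem_nhdsGT (by norm_num : (0:ℝ) < 1/7)] with x hx
  obtain ⟨hx0, hx7⟩ := hx
  have hxne : x ≠ 0 := ne_of_gt hx0
  have B0 := abs_le.mp (hT1 ((0:ℝ) * x) ⟨by nlinarith, by nlinarith⟩)
  have B1 := abs_le.mp (hT1 ((1:ℝ) * x) ⟨by nlinarith, by nlinarith⟩)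
  have B2 := abs_le.mp (hT1 ((2:ℝ) * x) ⟨by nlinarith, by nlinarith⟩)
  have B3 := abs_le.mp (hT1 ((3:ℝ) * x) ⟨by nlinarith, by nlinarith⟩)
  have B4 := abs_le.mp (hT1 ((4:ℝ) * x) ⟨by nlinarith, by nlinarith⟩)
  have B5 := abs_le.mp (hT1 ((5:ℝ) * x) ⟨by nlinarith, by nlinarith⟩)
  have B6 := abs_le.mp (hT1 ((6:ℝ) * x) ⟨by nlinarith, by nlinarith⟩)
  have B7 := abs_le.mp (hT1 ((7:ℝ) * x) ⟨by nlinarith, by nlinarith⟩)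
  have BS := abs_le.mp (hT2 (x / 2) ⟨by nlinarith, by nlinarith⟩)
  have BSl := mul_le_mul_of_nonneg_left BS.1 hx0.le
  have BSu := mul_le_mul_of_nonneg_left BS.2 hx0.le
  have hq1 : (0:ℝ) ≤ C₁ * x ^ 9 := mul_nonneg hC₁0 (by positivity)
  have hq2 : (0:ℝ) ≤ C₂ * x ^ 9 := mul_nonneg hC₂0 (by positivity)
  have main : |((5034629 / 3763200) * g (-((0:ℝ) * x))
            - (23533 / 15360) * g (-((1:ℝ) * x))
            + (4259 / 15360) * g (-((2:ℝ) * x))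
            - (1103 / 9216) * g (-((3:ℝ) * x))
            + (151 / 3072) * g (-((4:ℝ) * x))
            - (1171 / 76800) * g (-((5:ℝ) * x))
            + (139 / 46080) * g (-((6:ℝ) * x))
            - (211 / 752640) * g (-((7:ℝ) * x)))
          - x * deriv g (-(x / 2))| ≤ (1000000000 * C₁ + C₂) * x ^ 9 := by
    rw [abs_le]
    constructor
    · linarith [B0.1, B0.2, B1.1, B1.2, B2.1, B2.2, B3.1, B3.2, B4.1, B4.2, B5.1, B5.2,
        B6.1, B6.2, B7.1, B7.2, BSl, BSu, hq1, hq2]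
    · linarith [B0.1, B0.2, B1.1, B1.2, B2.1, B2.2, B3.1, B3.2, B4.1, B4.2, B5.1, B5.2,
        B6.1, B6.2, B7.1, B7.2, BSl, BSu, hq1, hq2]
  simp only [Real.norm_eq_abs, neg_mul]
  rw [abs_of_nonneg (by positivity : (0:ℝ) ≤ x ^ 8)]
  have hrw : (1 / x) *
          ((5034629 / 3763200) * g (-((0:ℝ) * x))
            - (23533 / 15360) * g (-((1:ℝ) * x))
            + (4259 / 15360) * g (-((2:ℝ) * x))
            - (1103 / 9216) * g (-((3:ℝ) * x))
            + (151 / 3072) * g (-((4:ℝ) * x))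
            - (1171 / 76800) * g (-((5:ℝ) * x))
            + (139 / 46080) * g (-((6:ℝ) * x))
            - (211 / 752640) * g (-((7:ℝ) * x)))
          - deriv g (-(x / 2))
      = (((5034629 / 3763200) * g (-((0:ℝ) * x))
            - (23533 / 15360) * g (-((1:ℝ) * x))
            + (4259 / 15360) * g (-((2:ℝ) * x))
            - (1103 / 9216) * g (-((3:ℝ) * x))
            + (151 / 3072) * g (-((4:ℝ) * x))
            - (1171 / 76800) * g (-((5:ℝ) * x))
            + (139 / 46080) * g (-((6:ℝ) * x))
            - (211 / 752640) * g (-((7:ℝ) * x)))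
          - x * deriv g (-(x / 2))) / x := by
    field_simp
  rw [hrw, abs_div, abs_of_pos hx0, div_le_iff₀ hx0]
  calc |_| ≤ (1000000000 * C₁ + C₂) * x ^ 9 := main
    _ = (1000000000 * C₁ + C₂) * x ^ 8 * x := by ring
end

section
/- The RK3-2 scheme defined by k₁ = Hu + f(tₙ), k₂ = H(u + (Δt/2)k₁) + f(tₙ+Δt/2), k₃ = H(u + (Δt/2)k₂) + f(tₙ+Δt/2), u^{n+1} = u + Δt·k₃ is second-order accurate: applied to u' = Hu + f with exact data u(tₙ), the local truncation error u(tₙ+Δt) − u^{n+1} is O(Δt³) for smooth f. -/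
/-! Expanding the stages, `u + Δt k₃` equals `u + Δt u'(tₙ) + (Δt²/2) u''(tₙ)` up to three
corrections: `Δt` times the first-order Taylor remainder of `f` over the half step,
`(Δt²/2) H (f(tₙ + Δt/2) - f(tₙ))` and `(Δt³/4) H² k₁`, each of which is `O(Δt³)`, as is the
second-order Taylor remainder of `u`. The Taylor bounds all come from one mean value estimate:
if `g 0 = 0` and `g' = O(x ^ k)` at `0`, then `g = O(x ^ (k + 1))`. -/

open Matrix Asymptotics Filter Topology

section

variable {E : Type*} [NormedAddCommGroup E] [NormedSpace ℝ E]

theorem isBigO_pow_succ_of_hasDerivAt {g g' : ℝ → E} {k : ℕ}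
    (hg : ∀ x, HasDerivAt g (g' x) x) (hg0 : g 0 = 0)
    (hg' : g' =O[𝓝 0] fun x => x ^ k) :
    g =O[𝓝 0] fun x => x ^ (k + 1) := by
  obtain ⟨C, hC, hbound⟩ := hg'.exists_pos
  obtain ⟨ε, hε, hball⟩ := Metric.eventually_nhds_iff_ball.mp hbound.bound
  refine IsBigO.of_bound C (Metric.eventually_nhds_iff_ball.mpr ⟨ε, hε, fun h hh => ?_⟩)
  have hsegment : ∀ x ∈ Set.uIcc 0 h, ‖g' x‖ ≤ C * |h| ^ k := fun x hx => by
    have hxh : |x| ≤ |h| := by simpa using Set.abs_sub_left_of_mem_uIcc hx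
    have hxε : x ∈ Metric.ball 0 ε := by
      rw [Metric.mem_ball, Real.dist_0_eq_abs] at hh ⊢
      exact hxh.trans_lt hh
    calc ‖g' x‖ ≤ C * ‖x ^ k‖ := hball x hxε
      _ ≤ C * |h| ^ k := by rw [norm_pow, Real.norm_eq_abs]; gcongr
  have hmvt := (convex_uIcc 0 h).norm_image_sub_le_of_norm_hasDerivWithin_le
    (fun x _ => (hg x).hasDerivWithinAt) hsegment Set.left_mem_uIcc Set.right_mem_uIcc
  calc ‖g h‖ = ‖g h - g 0‖ := by rw [hg0, sub_zero]
    _ ≤ C * |h| ^ k * ‖h - 0‖ := hmvt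
    _ = C * ‖h ^ (k + 1)‖ := by simp only [sub_zero, norm_pow, Real.norm_eq_abs]; ring

theorem HasDerivAt.comp_const_add_mul {g : ℝ → E} {g' : E} {t c h : ℝ}
    (hg : HasDerivAt g g' (t + c * h)) :
    HasDerivAt (fun h => g (t + c * h)) (c • g') h := by
  simpa [Function.comp_def] using hg.scomp h (((hasDerivAt_id' h).const_mul c).const_add t)

theorem DifferentiableAt.isBigO_sub_comp_add_mul {g : ℝ → E} {t : ℝ}
    (hg : DifferentiableAt ℝ g t) (c : ℝ) :
    (fun h => g (t + c * h) - g t) =O[𝓝 0] fun h => h := by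
  have hlim : Tendsto (fun h : ℝ => t + c * h) (𝓝 0) (𝓝 t) := by
    simpa using (Continuous.tendsto (by fun_prop) 0 : Tendsto (fun h : ℝ => t + c * h) _ _)
  have hstep : (fun h : ℝ => t + c * h - t) =O[𝓝 0] fun h => h :=
    (isBigO_const_mul_self c _ _).congr_left fun h => by ring
  exact (hg.isBigO_sub.comp_tendsto hlim).trans hstep

theorem isBigO_taylor_remainder_one {g g' : ℝ → E} {t : ℝ}
    (hg : ∀ s, HasDerivAt g (g' s) s) (hg' : DifferentiableAt ℝ g' t) (c : ℝ) :
    (fun h => g (t + c * h) - g t - (c * h) • g' t) =O[𝓝 0] fun h => h ^ 2 := by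
  refine isBigO_pow_succ_of_hasDerivAt (g' := fun h => c • (g' (t + c * h) - g' t))
    (fun h => ?_) (by simp) ?_
  · have := ((hg (t + c * h)).comp_const_add_mul.sub_const (g t)).fun_sub
      (((hasDerivAt_id' h).const_mul c).smul_const (g' t))
    simpa [smul_sub] using this
  · exact ((hg'.isBigO_sub_comp_add_mul c).const_smul_left c).congr_right fun h => (pow_one h).symm

theorem isBigO_taylor_remainder_two {g g' g'' : ℝ → E} {t : ℝ}
    (hg : ∀ s, HasDerivAt g (g' s) s) (hg' : ∀ s, HasDerivAt g' (g'' s) s)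
    (hg'' : DifferentiableAt ℝ g'' t) (c : ℝ) :
    (fun h => g (t + c * h) - g t - (c * h) • g' t - ((c * h) ^ 2 / 2) • g'' t)
      =O[𝓝 0] fun h => h ^ 3 := by
  refine isBigO_pow_succ_of_hasDerivAt
    (g' := fun h => c • (g' (t + c * h) - g' t - (c * h) • g'' t)) (fun h => ?_) (by simp) ?_
  · have hsq : HasDerivAt (fun h => (c * h) ^ 2 / 2) (c * (c * h)) h :=
      ((((hasDerivAt_id' h).const_mul c).fun_pow 2).div_const 2).congr_deriv (by push_cast; ring)
    have := (((hg (t + c * h)).comp_const_add_mul.sub_const (g t)).fun_sub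
      (((hasDerivAt_id' h).const_mul c).smul_const (g' t))).fun_sub (hsq.smul_const (g'' t))
    convert this using 1
    simp only [smul_sub, mul_smul, mul_one]
  · exact (isBigO_taylor_remainder_one hg' hg'' c).const_smul_left c

noncomputable def rk32Step (A : E →L[ℝ] E) (f : ℝ → E) (t : ℝ) (u : E) (Δt : ℝ) : E :=
  let k₁ := A u + f t
  let k₂ := A (u + (Δt / 2) • k₁) + f (t + Δt / 2)
  let k₃ := A (u + (Δt / 2) • k₂) + f (t + Δt / 2)
  u + Δt • k₃

theorem sub_rk32Step_eq (A : E →L[ℝ] E) (f : ℝ → E) (t : ℝ) (u₀ u₁ f' : E) (h : ℝ) :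
    u₁ - rk32Step A f t u₀ h =
      (u₁ - u₀ - h • (A u₀ + f t) - (h ^ 2 / 2) • (A (A u₀ + f t) + f'))
        - h • (f (t + h / 2) - f t - (h / 2) • f')
        - (h ^ 2 / 2) • A (f (t + h / 2) - f t)
        - (h ^ 3 / 4) • A (A (A u₀ + f t)) := by
  simp only [rk32Step, map_add, map_smul, map_sub]
  module

theorem rk32Step_local_error_isBigO (A : E →L[ℝ] E) {f : ℝ → E} (hf : ContDiff ℝ 2 f)
    {u : ℝ → E} (hu : ∀ t, HasDerivAt u (A (u t) + f t) t) (t : ℝ) :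
    (fun Δt => u (t + Δt) - rk32Step A f t (u t) Δt) =O[𝓝 0] fun Δt => Δt ^ 3 := by
  have hfd : Differentiable ℝ f := hf.differentiable (by norm_num)
  have hf'd : Differentiable ℝ (deriv f) := hf.differentiable_deriv_two
  have hud : Differentiable ℝ u := fun s => (hu s).differentiableAt
  have hu' : ∀ s, HasDerivAt (fun s => A (u s) + f s) (A (A (u s) + f s) + deriv f s) s :=
    fun s => (A.hasFDerivAt.comp_hasDerivAt s (hu s)).add (hfd s).hasDerivAt
  have hu'' : DifferentiableAt ℝ (fun s => A (A (u s) + f s) + deriv f s) t := by fun_prop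
  have hu_taylor := isBigO_taylor_remainder_two hu hu' hu'' 1
  have hf_taylor := isBigO_taylor_remainder_one (fun s => (hfd s).hasDerivAt) (hf'd t) (1 / 2)
  have hf_incr := (hfd t).isBigO_sub_comp_add_mul (1 / 2)
  simp only [one_mul, one_div_mul_eq_div] at hu_taylor hf_taylor hf_incr
  simp_rw [sub_rk32Step_eq A f t (u t) _ (deriv f t)]
  refine ((hu_taylor.sub ?_).sub ?_).sub ?_
  · simpa only [smul_eq_mul, ← pow_succ'] using (isBigO_refl (fun h : ℝ => h) _).smul hf_taylor
  · have hsq : (fun h : ℝ => h ^ 2 / 2) =O[𝓝 0] fun h => h ^ 2 :=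
      (isBigO_const_mul_self 2⁻¹ _ _).congr_left fun h => by ring
    simpa only [smul_eq_mul, ← pow_succ] using hsq.smul ((A.isBigO_comp _ _).trans hf_incr)
  · have hcube : (fun h : ℝ => h ^ 3 / 4) =O[𝓝 0] fun h => h ^ 3 :=
      (isBigO_const_mul_self 4⁻¹ _ _).congr_left fun h => by ring
    simpa only [smul_eq_mul, mul_one] using
      hcube.smul (isBigO_const_one ℝ (A (A (A (u t) + f t))) _)

end

/-- The RK3-2 scheme is second-order accurate: the local truncation error for
`u' = Hu + f`, starting from exact data `u(tₙ)`, is `O(Δt³)`. -/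
theorem rk32_local_truncation_error
    {n : ℕ} (H : Matrix (Fin n) (Fin n) ℝ) (f : ℝ → Fin n → ℝ)
    (hf : ContDiff ℝ 2 f) (u : ℝ → Fin n → ℝ)
    (hu : ∀ t, HasDerivAt u (H *ᵥ u t + f t) t) (tn : ℝ) :
    (fun Δt : ℝ =>
        u (tn + Δt) -
          (u tn + Δt •
            (H *ᵥ (u tn + (Δt / 2) •
              (H *ᵥ (u tn + (Δt / 2) • (H *ᵥ u tn + f tn)) + f (tn + Δt / 2)))
              + f (tn + Δt / 2))))
      =O[𝓝 (0 : ℝ)] fun Δt : ℝ => Δt ^ 3 :=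
  rk32Step_local_error_isBigO (Matrix.toLin' H).toContinuousLinearMap hf hu tn
end
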